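/- arXiv:2210.03169 — 4 statements merged into one kernel-verified Lean document; each statement's English description precedes it below -/
import Mathlib

section
/- Let L be a finite lattice, R a commutative ring, and τ : L → R a function such that each τ(F) is nilpotent and τ(F)·τ(G) = 0 whenever F and G are incomparable in L. Then for all F, G ∈ L: ( ∏_{F ≤ H < F∨G} (1 - τ(H))^{-1} − 1 ) · ( ∏_{G ≤ J < F∨G} (1 - τ(J))^{-1} − 1 ) = 0, where the products run over H with F ≤ H and H < F∨G, respectively J with G ≤ J and J < F∨G. -/
/-!
Since `(1 - t)⁻¹ - 1 = t (1 - t)⁻¹`, each product minus one lies in the ideal generated by the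
`τ H` of its own interval. An `H` of the first interval and a `J` of the second are incomparable,
so these generators multiply to zero, and hence so does the product of the two ideals.
-/

open Finset

theorem Ideal.prod_sub_one_mem {ι R : Type*} [CommRing R] {I : Ideal R} {s : Finset ι}
    {g : ι → R} (hg : ∀ i ∈ s, g i - 1 ∈ I) : (∏ i ∈ s, g i) - 1 ∈ I := by
  rw [← Ideal.Quotient.eq, map_prod, map_one]
  refine prod_eq_one fun i hi => ?_
  rw [← map_one (Ideal.Quotient.mk I), Ideal.Quotient.eq]
  exact hg i hi

theorem Ring.inverse_one_sub_sub_one_mem_span {R : Type*} [CommRing R] {t : R}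
    (ht : IsUnit (1 - t)) : Ring.inverse (1 - t) - 1 ∈ Ideal.span {t} := by
  have : Ring.inverse (1 - t) - 1 = t * Ring.inverse (1 - t) := by
    linear_combination Ring.mul_inverse_cancel _ ht
  exact this ▸ Ideal.mul_mem_right _ _ (Ideal.mem_span_singleton_self t)

theorem Ideal.span_mul_span_eq_bot {R : Type*} [CommRing R] {A B : Set R}
    (h : ∀ a ∈ A, ∀ b ∈ B, a * b = 0) : Ideal.span A * Ideal.span B = ⊥ := by
  rw [Ideal.span_mul_span', Ideal.span_eq_bot]
  rintro _ ⟨a, ha, b, hb, rfl⟩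
  exact h a ha b hb

theorem not_le_of_le_of_lt_sup {L : Type*} [Lattice L] {F G H J : L} (hF : F ≤ H) (hG : G ≤ J)
    (hJ : J < F ⊔ G) : ¬H ≤ J :=
  fun hHJ => hJ.not_ge (sup_le (hF.trans hHJ) hG)

/-- Let `L` be a finite lattice, `R` a commutative ring, and `τ : L → R` with each `τ F`
nilpotent and `τ F * τ G = 0` whenever `F` and `G` are incomparable.  Then for all
`F G : L`,
`(∏_{F ≤ H < F⊔G} (1 - τ H)⁻¹ − 1) * (∏_{G ≤ J < F⊔G} (1 - τ J)⁻¹ − 1) = 0`. -/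
theorem incomparable_interval_products {L R : Type*} [Lattice L] [Fintype L]
    [DecidableRel ((· ≤ ·) : L → L → Prop)] [DecidableRel ((· < ·) : L → L → Prop)]
    [CommRing R] (τ : L → R) (hnil : ∀ F, IsNilpotent (τ F))
    (hinc : ∀ F G : L, ¬F ≤ G → ¬G ≤ F → τ F * τ G = 0) (F G : L) :
    ((∏ H ∈ univ.filter fun H => F ≤ H ∧ H < F ⊔ G, Ring.inverse (1 - τ H)) - 1) *
      ((∏ J ∈ univ.filter fun J => G ≤ J ∧ J < F ⊔ G, Ring.inverse (1 - τ J)) - 1) = 0 := by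
  set s₁ := univ.filter fun H => F ≤ H ∧ H < F ⊔ G
  set s₂ := univ.filter fun J => G ≤ J ∧ J < F ⊔ G
  have hmem : ∀ s : Finset L, (∏ H ∈ s, Ring.inverse (1 - τ H)) - 1 ∈ Ideal.span (τ '' s) :=
    fun s => Ideal.prod_sub_one_mem fun H hH =>
      Ideal.span_mono (by simpa using Set.mem_image_of_mem τ hH)
        (Ring.inverse_one_sub_sub_one_mem_span (hnil H).isUnit_one_sub)
  have hbot : Ideal.span (τ '' s₁) * Ideal.span (τ '' s₂) = ⊥ := by
    refine Ideal.span_mul_span_eq_bot ?_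
    rintro _ ⟨H, hH, rfl⟩ _ ⟨J, hJ, rfl⟩
    simp only [s₁, s₂, coe_filter, mem_univ, true_and, Set.mem_ofPred_eq] at hH hJ
    exact hinc H J (not_le_of_le_of_lt_sup hH.1 hJ.1 hJ.2)
      (not_le_of_le_of_lt_sup hJ.1 hH.1 (sup_comm F G ▸ hH.2))
  simpa [hbot] using Ideal.mul_mem_mul (hmem s₁) (hmem s₂)
end

section
/- Let L be a finite lattice and consider the polynomial ring ℤ[x_F : F ∈ L]. The ideal I_3 generated by all products x_F x_G with F, G incomparable equals the ideal generated by all elements z_{F,G} := Σ_{F ≤ F' < F∨G} Σ_{G ≤ G' < F∨G} x_{F'} x_{G'} for arbitrary F, G ∈ L (where z_{F,G} = 0 when F and G are comparable, since one of the index sets is then empty). -/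
open Finset MvPolynomial

/-- `z_{F,G} := Σ_{F ≤ F' < F∨G} Σ_{G ≤ G' < F∨G} x_{F'} x_{G'}` in `ℤ[x_F : F ∈ L]`. -/
noncomputable def zElt {L : Type*} [Lattice L] [Fintype L]
    [DecidableRel ((· ≤ ·) : L → L → Prop)] [DecidableRel ((· < ·) : L → L → Prop)]
    (F G : L) : MvPolynomial L ℤ :=
  ∑ F' ∈ univ.filter fun F' => F ≤ F' ∧ F' < F ⊔ G,
    ∑ G' ∈ univ.filter fun G' => G ≤ G' ∧ G' < F ⊔ G, X F' * X G'

lemma zElt_eq_sum_product {L : Type*} [Lattice L] [Fintype L]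
    [DecidableRel ((· ≤ ·) : L → L → Prop)] [DecidableRel ((· < ·) : L → L → Prop)]
    (F G : L) :
    zElt F G = ∑ q ∈ (univ.filter fun F' => F ≤ F' ∧ F' < F ⊔ G) ×ˢ
        (univ.filter fun G' => G ≤ G' ∧ G' < F ⊔ G), X q.1 * X q.2 := by
  rw [zElt, Finset.sum_product]

lemma term_incomp {L : Type*} [Lattice L] {F G F' G' : L}
    (hF : F ≤ F') (hF' : F' < F ⊔ G) (hG : G ≤ G') (hG' : G' < F ⊔ G) :
    ¬F' ≤ G' ∧ ¬G' ≤ F' := by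
  constructor
  · intro h
    exact hG'.not_ge (sup_le (hF.trans h) hG)
  · intro h
    exact hF'.not_ge (sup_le hF (hG.trans h))

lemma mem_span_z {L : Type*} [Lattice L] [Fintype L]
    [DecidableRel ((· ≤ ·) : L → L → Prop)] [DecidableRel ((· < ·) : L → L → Prop)] :
    ∀ (p : L × L), ¬p.1 ≤ p.2 → ¬p.2 ≤ p.1 →
      X p.1 * X p.2 ∈ Ideal.span {p : MvPolynomial L ℤ | ∃ F G : L, p = zElt F G} := by
  classical
  intro p
  induction p using (wellFounded_gt (α := L × L)).induction with
  | _ p IH =>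
    obtain ⟨F, G⟩ := p
    intro hFG hGF
    set S := (univ.filter fun F' => F ≤ F' ∧ F' < F ⊔ G) ×ˢ
        (univ.filter fun G' => G ≤ G' ∧ G' < F ⊔ G) with hS
    have hmem : (F, G) ∈ S := by
      simp only [hS, Finset.mem_product, Finset.mem_filter, Finset.mem_univ, true_and]
      exact ⟨⟨le_rfl, left_lt_sup.2 hGF⟩, ⟨le_rfl, right_lt_sup.2 hFG⟩⟩
    have key : (X F * X G : MvPolynomial L ℤ) =
        zElt F G - ∑ q ∈ S.erase (F, G), X q.1 * X q.2 := by
      rw [zElt_eq_sum_product, ← hS,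
        ← Finset.sum_erase_add S (fun q => (X q.1 * X q.2 : MvPolynomial L ℤ)) hmem]
      ring
    rw [key]
    refine sub_mem (Ideal.subset_span ⟨F, G, rfl⟩) (Ideal.sum_mem _ ?_)
    intro q hq
    have hne : q ≠ (F, G) := Finset.ne_of_mem_erase hq
    have hqS : q ∈ S := Finset.mem_of_mem_erase hq
    simp only [hS, Finset.mem_product, Finset.mem_filter, Finset.mem_univ, true_and] at hqS
    obtain ⟨⟨h1, h1'⟩, h2, h2'⟩ := hqS
    have hinc := term_incomp h1 h1' h2 h2'
    have hgt : (F, G) < q := lt_of_le_of_ne ⟨h1, h2⟩ (fun h => hne h.symm)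
    exact IH q hgt hinc.1 hinc.2

/-- In `ℤ[x_F : F ∈ L]` for a finite lattice `L`, the ideal generated by the products
`x_F x_G` over incomparable pairs `F, G` equals the ideal generated by the elements
`z_{F,G}` for arbitrary `F, G ∈ L`. -/
theorem ideal_incomparable_eq_ideal_z {L : Type*} [Lattice L] [Fintype L]
    [DecidableRel ((· ≤ ·) : L → L → Prop)] [DecidableRel ((· < ·) : L → L → Prop)] :
    Ideal.span {p : MvPolynomial L ℤ | ∃ F G : L, ¬F ≤ G ∧ ¬G ≤ F ∧ p = X F * X G} =
      Ideal.span {p : MvPolynomial L ℤ | ∃ F G : L, p = zElt F G} := by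
  apply le_antisymm
  · rw [Ideal.span_le]
    rintro _ ⟨F, G, hFG, hGF, rfl⟩
    exact mem_span_z (F, G) hFG hGF
  · rw [Ideal.span_le]
    rintro _ ⟨F, G, rfl⟩
    rw [zElt]
    refine Ideal.sum_mem _ fun F' hF' => Ideal.sum_mem _ fun G' hG' => ?_
    simp only [Finset.mem_filter, Finset.mem_univ, true_and] at hF' hG'
    have hinc := term_incomp hF'.1 hF'.2 hG'.1 hG'.2
    exact Ideal.subset_span ⟨F', G', hinc.1, hinc.2, rfl⟩
end

section
/- Let M be a loopless matroid on ground set E with lattice of flats L, and let T = ℤ[x_F : F ∈ L] ⊗ ℤ[y_e : e ∈ E]. Let I_2 be the ideal generated by y_e − Σ_{F ∌ e} x_F for e ∈ E, and I_4^aug the ideal generated by y_e x_F for all pairs with e ∉ F. Then I_2 + I_4^aug = I_2 + ⟨y_e^2 : e ∈ E⟩ + ⟨w_{e,F} : e ∈ E, F ∈ L, F ≠ ∅⟩, where w_{e,F} := Σ_{G ∈ L, F ⊆ G, e ∉ G} y_e x_G. -/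
/-!
Modulo `I₂`, `y_e² ≡ y_e · Σ_{G ∌ e} x_G`, which like every `w_{e,F}` is a sum of generators
`y_e x_G` of `I₄^aug`; this gives `⊇`. Conversely `y_e x_F = w_{e,F} - Σ_{G ⊋ F, e ∉ G} y_e x_G`,
where `w_{e,F}` lies in the right-hand side (for `F = ∅` it is `≡ y_e²`), so downward induction
over the finite poset of flats puts every generator of `I₄^aug` there.
-/

open MvPolynomial

variable {α : Type*} [Finite α]

open Finset

theorem finsum_subtype_and_eq_sum_filter {β A : Type*} [AddCommMonoid A] (p q : β → Prop)
    [Fintype (Subtype p)] [DecidablePred fun b : Subtype p => q b] (g : Subtype p → A) :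
    ∑ᶠ b : {b // p b ∧ q b}, g ⟨b.1, b.2.1⟩ =
      ∑ b ∈ univ.filter (fun b : Subtype p => q b), g b := by
  rw [← finsum_comp_equiv (Equiv.subtypeSubtypeEquivSubtypeInter p q)]
  exact (finsum_subtype_eq_finsum_cond (fun b : Subtype p => q b)).trans
    (finsum_cond_eq_sum_of_cond_iff g fun _ => by simp)

theorem mem_of_forall_sum_filter_le_mem {L G S : Type*} [PartialOrder L] [Fintype L]
    [DecidableLE L] [AddCommGroup G] [SetLike S G] [AddSubgroupClass S G] {J : S}
    {P : L → Prop} [DecidablePred P] {f : L → G}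
    (h : ∀ F, P F → ∑ G ∈ univ.filter (fun G => F ≤ G ∧ P G), f G ∈ J) {F : L} (hF : P F) :
    f F ∈ J := by
  classical
  induction F using WellFoundedGT.induction with
  | _ F ih =>
  have hFF : F ∈ univ.filter (fun G => F ≤ G ∧ P G) := by simp [hF]
  have hrest : ∑ G ∈ (univ.filter (fun G => F ≤ G ∧ P G)).erase F, f G ∈ J := by
    refine sum_mem fun G hG => ?_
    obtain ⟨hGF, hFG, hPG⟩ := by simpa using hG
    exact ih G (lt_of_le_of_ne hFG (Ne.symm hGF)) hPG
  have := h F hF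
  rwa [← add_sum_erase _ _ hFF, add_mem_cancel_right hrest] at this

namespace Matroid

variable {E : Type*} (M : Matroid E)

/-- `linearIdeal` and `augIdeal` are the paper's `I₂` and `I₄^aug`, and `w e F` is `w_{e,F}`. -/
noncomputable def linearIdeal : Ideal (MvPolynomial ({F : Set E // M.IsFlat F} ⊕ E) ℤ) :=
  Ideal.span {p | ∃ e : E, p = X (Sum.inr e) -
    ∑ᶠ F : {F : Set E // M.IsFlat F ∧ e ∉ F}, X (Sum.inl ⟨F.1, F.2.1⟩)}

noncomputable def augIdeal : Ideal (MvPolynomial ({F : Set E // M.IsFlat F} ⊕ E) ℤ) :=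
  Ideal.span {p | ∃ (e : E) (F : {F : Set E // M.IsFlat F}),
    e ∉ F.1 ∧ p = X (Sum.inr e) * X (Sum.inl F)}

noncomputable def ySqIdeal : Ideal (MvPolynomial ({F : Set E // M.IsFlat F} ⊕ E) ℤ) :=
  Ideal.span {p | ∃ e : E, p = X (Sum.inr e) ^ 2}

noncomputable def w (e : E) (F : {F : Set E // M.IsFlat F}) :
    MvPolynomial ({F : Set E // M.IsFlat F} ⊕ E) ℤ :=
  ∑ᶠ G : {G : Set E // M.IsFlat G ∧ F.1 ⊆ G ∧ e ∉ G}, X (Sum.inr e) * X (Sum.inl ⟨G.1, G.2.1⟩)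

noncomputable def wIdeal : Ideal (MvPolynomial ({F : Set E // M.IsFlat F} ⊕ E) ℤ) :=
  Ideal.span {p | ∃ (e : E) (F : {F : Set E // M.IsFlat F}), F.1 ≠ ∅ ∧ p = M.w e F}

variable [Fintype {F : Set E // M.IsFlat F}]

open Classical in
theorem sq_sub_sum_mem_linearIdeal (e : E) :
    X (Sum.inr e) ^ 2 - ∑ G ∈ univ.filter (fun G : {F // M.IsFlat F} => e ∉ G.1),
      X (Sum.inr e) * X (Sum.inl G) ∈ M.linearIdeal := by
  have hgen : X (Sum.inr e) - ∑ G ∈ univ.filter (fun G : {F // M.IsFlat F} => e ∉ G.1),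
      X (Sum.inl G) ∈ M.linearIdeal := by
    rw [← finsum_subtype_and_eq_sum_filter M.IsFlat (e ∉ ·) fun G => X (Sum.inl G)]
    exact Ideal.subset_span ⟨e, rfl⟩
  have := M.linearIdeal.mul_mem_left (X (Sum.inr e)) hgen
  rwa [mul_sub, ← sq, mul_sum] at this

open Classical in
theorem w_eq_sum_filter (e : E) (F : {F : Set E // M.IsFlat F}) :
    M.w e F = ∑ G ∈ univ.filter (fun G => F ≤ G ∧ e ∉ G.1), X (Sum.inr e) * X (Sum.inl G) :=
  finsum_subtype_and_eq_sum_filter M.IsFlat (fun G => F.1 ⊆ G ∧ e ∉ G)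
    fun G => X (Sum.inr e) * X (Sum.inl G)

theorem w_mem_augIdeal (e : E) (F : {F : Set E // M.IsFlat F}) : M.w e F ∈ M.augIdeal := by
  classical
  rw [w_eq_sum_filter]
  exact sum_mem fun G hG => Ideal.subset_span ⟨e, G, (mem_filter.1 hG).2.2, rfl⟩

theorem w_mem_linearIdeal_sup_ySqIdeal (e : E) {F : {F : Set E // M.IsFlat F}} (hF : F.1 = ∅) :
    M.w e F ∈ M.linearIdeal + M.ySqIdeal := by
  classical
  have hw : M.w e F = X (Sum.inr e) ^ 2 - (X (Sum.inr e) ^ 2 -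
      ∑ G ∈ univ.filter (fun G : {F // M.IsFlat F} => e ∉ G.1),
        X (Sum.inr e) * X (Sum.inl G)) := by
    rw [sub_sub_cancel, w_eq_sum_filter]
    have hle (G : {F : Set E // M.IsFlat F}) : F ≤ G := show F.1 ⊆ G.1 from hF ▸ G.1.empty_subset
    simp only [hle, true_and]
  rw [hw]
  exact sub_mem (Ideal.mem_sup_right (Ideal.subset_span ⟨e, rfl⟩))
    (Ideal.mem_sup_left (M.sq_sub_sum_mem_linearIdeal e))

theorem augIdeal_le : M.augIdeal ≤ M.linearIdeal + M.ySqIdeal + M.wIdeal := by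
  classical
  refine Ideal.span_le.2 ?_
  rintro _ ⟨e, F, heF, rfl⟩
  refine mem_of_forall_sum_filter_le_mem (P := fun G : {F : Set E // M.IsFlat F} => e ∉ G.1)
    (f := fun G => X (Sum.inr e) * X (Sum.inl G)) (fun F _ => ?_) heF
  rw [← w_eq_sum_filter]
  rcases eq_or_ne F.1 ∅ with hF | hF
  · exact Ideal.mem_sup_left (M.w_mem_linearIdeal_sup_ySqIdeal e hF)
  · exact Ideal.mem_sup_right (Ideal.subset_span ⟨e, F, hF, rfl⟩)

theorem ySqIdeal_le : M.ySqIdeal ≤ M.linearIdeal + M.augIdeal := by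
  classical
  refine Ideal.span_le.2 ?_
  rintro _ ⟨e, rfl⟩
  rw [SetLike.mem_coe, ← sub_add_cancel (X (Sum.inr e) ^ 2)]
  refine add_mem (Ideal.mem_sup_left (M.sq_sub_sum_mem_linearIdeal e))
    (Ideal.mem_sup_right (sum_mem fun G hG => Ideal.subset_span ⟨e, G, (mem_filter.1 hG).2, rfl⟩))

theorem wIdeal_le_augIdeal : M.wIdeal ≤ M.augIdeal :=
  Ideal.span_le.2 fun _ ⟨e, F, _, hp⟩ => hp ▸ M.w_mem_augIdeal e F

end Matroid

theorem I2_add_I4aug_eq_general (M : Matroid α) :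
    (Ideal.span {p : MvPolynomial ({F : Set α // M.IsFlat F} ⊕ α) ℤ |
        ∃ e : α, p = X (Sum.inr e) -
          ∑ᶠ F : {F : Set α // M.IsFlat F ∧ e ∉ F}, X (Sum.inl ⟨F.1, F.2.1⟩)} +
      Ideal.span {p | ∃ (e : α) (F : {F : Set α // M.IsFlat F}),
        e ∉ F.1 ∧ p = X (Sum.inr e) * X (Sum.inl F)}) =
    (Ideal.span {p : MvPolynomial ({F : Set α // M.IsFlat F} ⊕ α) ℤ |
        ∃ e : α, p = X (Sum.inr e) -
          ∑ᶠ F : {F : Set α // M.IsFlat F ∧ e ∉ F}, X (Sum.inl ⟨F.1, F.2.1⟩)} +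
      Ideal.span {p | ∃ e : α, p = X (Sum.inr e) ^ 2} +
      Ideal.span {p | ∃ (e : α) (F : {F : Set α // M.IsFlat F}), F.1 ≠ ∅ ∧
        p = ∑ᶠ G : {G : Set α // M.IsFlat G ∧ F.1 ⊆ G ∧ e ∉ G},
          X (Sum.inr e) * X (Sum.inl ⟨G.1, G.2.1⟩)}) := by
  have := Fintype.ofFinite {F : Set α // M.IsFlat F}
  exact le_antisymm (sup_le (le_sup_left.trans le_sup_left) M.augIdeal_le)
    (sup_le (sup_le le_sup_left M.ySqIdeal_le) (M.wIdeal_le_augIdeal.trans le_sup_right))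

/-- In `T = ℤ[x_F : F a flat of M] ⊗ ℤ[y_e : e ∈ E]`, for a loopless matroid `M` on ground
set `E = α`:  with `I₂ = ⟨y_e − Σ_{F ∌ e} x_F⟩`, `I₄^aug = ⟨y_e x_F : e ∉ F⟩`,
`w_{e,F} = Σ_{F ⊆ G, e ∉ G} y_e x_G`, one has
`I₂ + I₄^aug = I₂ + ⟨y_e² : e⟩ + ⟨w_{e,F} : e, F ≠ ∅⟩`. -/
theorem I2_add_I4aug_eq (M : Matroid α) (hground : M.E = Set.univ)
    (hloopless : M.closure ∅ = ∅) :
    (Ideal.span {p : MvPolynomial ({F : Set α // M.IsFlat F} ⊕ α) ℤ |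
        ∃ e : α, p = X (Sum.inr e) -
          ∑ᶠ F : {F : Set α // M.IsFlat F ∧ e ∉ F}, X (Sum.inl ⟨F.1, F.2.1⟩)} +
      Ideal.span {p | ∃ (e : α) (F : {F : Set α // M.IsFlat F}),
        e ∉ F.1 ∧ p = X (Sum.inr e) * X (Sum.inl F)}) =
    (Ideal.span {p : MvPolynomial ({F : Set α // M.IsFlat F} ⊕ α) ℤ |
        ∃ e : α, p = X (Sum.inr e) -
          ∑ᶠ F : {F : Set α // M.IsFlat F ∧ e ∉ F}, X (Sum.inl ⟨F.1, F.2.1⟩)} +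
      Ideal.span {p | ∃ e : α, p = X (Sum.inr e) ^ 2} +
      Ideal.span {p | ∃ (e : α) (F : {F : Set α // M.IsFlat F}), F.1 ≠ ∅ ∧
        p = ∑ᶠ G : {G : Set α // M.IsFlat G ∧ F.1 ⊆ G ∧ e ∉ G},
          X (Sum.inr e) * X (Sum.inl ⟨G.1, G.2.1⟩)}) :=
  I2_add_I4aug_eq_general M
end

section
/- Let n ≥ 3 and let m = (m_S) be a tuple of natural numbers indexed by subsets S ⊆ [n−1] with |S| ≥ 3. Define m̃ indexed by nonempty flats of the braid matroid B_{n−1} (partitions of [n−1]) by m̃_{F_S} = m_S and m̃_F = 0 for flats not of the form F_S. Then m satisfies the Cerberus condition if and only if m̃ satisfies the dragon Hall–Rado condition for B_{n−1}. -/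
/-!
Let `σ` be the join of the flats `F_S` over the support `𝒮` of a sub-tuple `m'` of `m`, and let
`B = ⋃ 𝒮`. Every `S ∈ 𝒮` lies in one block of `σ` and the blocks meeting the complement of `B`
are singletons, so `rank σ = |B| - #(blocks inside B)`. In particular `rank σ < |B|`, and the
dragon Hall–Rado bound `Σ m' < rank σ` gives the Cerberus bound `Σ m' + 2 ≤ |B|`. Conversely,
the Cerberus bound for the members of `𝒮` inside a block `K ⊆ B` reads
`Σ_{S ⊆ K} m'_S + 2 ≤ |K|`, and summing over the blocks gives `Σ m' < rank σ`. Sub-tuples of `m̃`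
are exactly the lifts of sub-tuples of `m`, since `S ↦ F_S` is injective on sets of size `≥ 2`.
-/

open Finset

/-- For `S ⊆ ℕ`, the partition of `[n-1] = {1,…,n-1}` whose only (possibly) non-singleton
block is `S ∩ [n-1]`, as a setoid on `{i // i ∈ Icc 1 (n-1)}`. -/
def braidFlat (n : ℕ) (S : Finset ℕ) : Setoid {i : ℕ // i ∈ Icc 1 (n - 1)} :=
  ⟨fun x y => x = y ∨ (x.1 ∈ S ∧ y.1 ∈ S),
    ⟨fun _ => Or.inl rfl, by rintro x y (rfl | h) <;> tauto,
      by rintro x y z (rfl | h) (rfl | h') <;> tauto⟩⟩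

/-- The rank of a partition `π` of `[n-1]` in the partition lattice (the lattice of flats
of the braid matroid `B_{n-1}`): `n - 1` minus the number of blocks. -/
noncomputable def partitionRank (n : ℕ) (π : Setoid {i : ℕ // i ∈ Icc 1 (n - 1)}) : ℕ :=
  (n - 1) - π.classes.ncard

open Function

namespace Setoid

variable {α ι : Type*}

theorem image_mk_eq_singleton (σ : Setoid α) [DecidableEq (Quotient σ)] {s : Finset α}
    (hs : ∀ y ∈ s, ∀ z ∈ s, σ y z) {x : α} (hx : x ∈ s) :
    s.image (Quotient.mk σ) = {Quotient.mk σ x} := by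
  rw [image_congr fun y hy => Quotient.sound (hs y hy x hx), image_const ⟨x, hx⟩]

theorem sum_fiberwise_of_rel {M : Type*} [AddCommMonoid M] (σ : Setoid α)
    [Fintype (Quotient σ)] [DecidableEq (Quotient σ)] {𝒮 : Finset ι} {b : ι → Finset α}
    (hb : ∀ i ∈ 𝒮, (b i).Nonempty) (hrel : ∀ i ∈ 𝒮, ∀ x ∈ b i, ∀ y ∈ b i, σ x y) (w : ι → M) :
    ∑ q, ∑ i ∈ 𝒮 with q ∈ (b i).image (Quotient.mk σ), w i = ∑ i ∈ 𝒮, w i := by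
  rw [← sum_comm' (s := 𝒮) (t := fun i => (b i).image (Quotient.mk σ)) (by simp)]
  refine sum_congr rfl fun i hi => ?_
  obtain ⟨x, hx⟩ := hb i hi
  simp [σ.image_mk_eq_singleton (hrel i hi) hx]

variable [Finite α]

theorem card_sub_card_quotient_lt (σ : Setoid α) {B : Finset α} (hB : B.Nonempty)
    (hσ : ∀ x y, σ x y → x = y ∨ (x ∈ B ∧ y ∈ B)) :
    Nat.card α - Nat.card (Quotient σ) < B.card := by
  classical
  have := Fintype.ofFinite α
  have := hB.card_pos
  obtain ⟨b, hb⟩ := hB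
  have hinj : Set.InjOn (Quotient.mk σ) ↑Bᶜ := by
    intro x hx y hy hxy
    simp only [coe_compl, Set.mem_compl_iff, mem_coe] at hx hy
    exact (hσ x y (Quotient.exact hxy)).resolve_right fun h => hx h.1
  have hmiss : Quotient.mk σ b ∉ Bᶜ.image (Quotient.mk σ) := by
    simp only [mem_image, mem_compl, not_exists, not_and]
    intro y hy hyb
    rcases hσ y b (Quotient.exact hyb) with rfl | h
    exacts [hy hb, hy h.1]
  have hlt : Bᶜ.card < Nat.card (Quotient σ) := by
    rw [← card_image_of_injOn hinj, Nat.card_eq_fintype_card, ← card_univ]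
    exact card_lt_card (ssubset_iff_of_subset (subset_univ _) |>.mpr ⟨_, mem_univ _, hmiss⟩)
  rw [Nat.card_eq_fintype_card, ← card_add_card_compl B]
  omega

theorem sum_lt_card_sub_card_quotient [DecidableEq α] (σ : Setoid α) {𝒮 : Finset ι}
    {b : ι → Finset α} (h𝒮 : 𝒮.Nonempty) (hb : ∀ i ∈ 𝒮, (b i).Nonempty)
    (hrel : ∀ i ∈ 𝒮, ∀ x ∈ b i, ∀ y ∈ b i, σ x y) (w : ι → ℕ)
    (hw : ∀ T ⊆ 𝒮, T.Nonempty → ∑ i ∈ T, w i + 2 ≤ (T.biUnion b).card) :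
    ∑ i ∈ 𝒮, w i < Nat.card α - Nat.card (Quotient σ) := by
  classical
  have := Fintype.ofFinite α
  let K : Quotient σ → Finset α := fun q => univ.filter (Quotient.mk σ · = q)
  let T : Quotient σ → Finset ι := fun q => {i ∈ 𝒮 | q ∈ (b i).image (Quotient.mk σ)}
  have himage : ∀ i ∈ 𝒮, ∀ x ∈ b i, (b i).image (Quotient.mk σ) = {Quotient.mk σ x} :=
    fun i hi _ => σ.image_mk_eq_singleton (hrel i hi)
  have hlt : ∀ q, (T q).Nonempty → ∑ i ∈ T q, w i + 1 < (K q).card := by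
    intro q hT
    have hsub : (T q).biUnion b ⊆ K q := by
      intro x hx
      obtain ⟨i, hi, hxi⟩ := mem_biUnion.mp hx
      obtain ⟨hi𝒮, hq⟩ := mem_filter.mp hi
      rw [himage i hi𝒮 x hxi, mem_singleton] at hq
      simp [K, hq]
    have := hw (T q) (filter_subset _ _) hT
    have := card_le_card hsub
    omega
  have hle : ∀ q, ∑ i ∈ T q, w i + 1 ≤ (K q).card := by
    intro q
    rcases (T q).eq_empty_or_nonempty with hT | hT
    · obtain ⟨x, rfl⟩ := Quotient.exists_rep q
      rw [hT, sum_empty]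
      exact card_pos.mpr ⟨x, by simp [K]⟩
    · exact (hlt q hT).le
  obtain ⟨i₀, hi₀⟩ := h𝒮
  obtain ⟨x₀, hx₀⟩ := hb i₀ hi₀
  have hT₀ : (T (Quotient.mk σ x₀)).Nonempty :=
    ⟨i₀, mem_filter.mpr ⟨hi₀, by simp [himage i₀ hi₀ x₀ hx₀]⟩⟩
  suffices ∑ i ∈ 𝒮, w i + Nat.card (Quotient σ) < Nat.card α by omega
  calc ∑ i ∈ 𝒮, w i + Nat.card (Quotient σ) = ∑ q, (∑ i ∈ T q, w i + 1) := by
        rw [← σ.sum_fiberwise_of_rel hb hrel, sum_add_distrib, Nat.card_eq_fintype_card,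
          ← card_univ, card_eq_sum_ones]
    _ < ∑ q, (K q).card := sum_lt_sum (fun q _ => hle q) ⟨_, mem_univ _, hlt _ hT₀⟩
    _ = Nat.card α := by
        rw [Nat.card_eq_fintype_card, ← card_univ]
        exact (card_eq_sum_card_fiberwise fun x _ => mem_univ _).symm

end Setoid

theorem Finset.card_subtype_of_forall {α : Type*} {p : α → Prop} [DecidablePred p]
    {S : Finset α} (h : ∀ x ∈ S, p x) : (S.subtype p).card = S.card := by
  rw [← card_map, subtype_map_of_mem h]

theorem partitionRank_eq (n : ℕ) (σ : Setoid {i : ℕ // i ∈ Icc 1 (n - 1)}) :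
    partitionRank n σ = Nat.card {i : ℕ // i ∈ Icc 1 (n - 1)} - Nat.card (Quotient σ) := by
  rw [partitionRank, ← Nat.card_coe_set_eq, Nat.card_congr σ.quotientEquivClasses.symm,
    Nat.card_eq_finsetCard, Nat.card_Icc, Nat.add_sub_cancel]

section Flats

variable {n : ℕ} {S T : Finset ℕ} {𝒮 : Finset (Finset ℕ)}

theorem braidFlat_mono (h : S ⊆ T) : braidFlat n S ≤ braidFlat n T := by
  rintro x y (rfl | ⟨hx, hy⟩)
  exacts [Or.inl rfl, Or.inr ⟨h hx, h hy⟩]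

theorem subset_of_braidFlat_le (hS : 2 ≤ S.card) (hSn : S ⊆ Icc 1 (n - 1))
    (h : braidFlat n S ≤ braidFlat n T) : S ⊆ T := by
  intro x hx
  obtain ⟨y, hy, hyx⟩ := exists_mem_ne hS x
  have hxy : braidFlat n T ⟨x, hSn hx⟩ ⟨y, hSn hy⟩ := h (Or.inr ⟨hx, hy⟩)
  rcases hxy with hxy | ⟨hxT, -⟩
  exacts [absurd (congrArg Subtype.val hxy).symm hyx, hxT]

theorem braidFlat_injOn (n : ℕ) :
    Set.InjOn (braidFlat n) {S | 2 ≤ S.card ∧ S ⊆ Icc 1 (n - 1)} := fun _ hS _ hT h =>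
  (subset_of_braidFlat_le hS.1 hS.2 h.le).antisymm (subset_of_braidFlat_le hT.1 hT.2 h.ge)

noncomputable def braidJoin (n : ℕ) (𝒮 : Finset (Finset ℕ)) :
    Setoid {i : ℕ // i ∈ Icc 1 (n - 1)} :=
  sSup (braidFlat n '' ↑𝒮)

theorem braidFlat_le_braidJoin (hS : S ∈ 𝒮) : braidFlat n S ≤ braidJoin n 𝒮 :=
  le_sSup (Set.mem_image_of_mem _ hS)

theorem braidJoin_le_braidFlat_biUnion : braidJoin n 𝒮 ≤ braidFlat n (𝒮.biUnion id) :=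
  sSup_le <| Set.forall_mem_image.mpr fun _ hS => braidFlat_mono (subset_biUnion_of_mem id hS)

theorem partitionRank_braidJoin_lt (h𝒮 : 𝒮.Nonempty)
    (hS : ∀ S ∈ 𝒮, S.Nonempty ∧ S ⊆ Icc 1 (n - 1)) :
    partitionRank n (braidJoin n 𝒮) < (𝒮.biUnion id).card := by
  set B := 𝒮.biUnion id
  have hBn : B ⊆ Icc 1 (n - 1) := biUnion_subset.mpr fun S hS' => (hS S hS').2
  obtain ⟨S, hS𝒮⟩ := h𝒮
  obtain ⟨x, hx⟩ := (hS S hS𝒮).1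
  have hB : (B.subtype (· ∈ Icc 1 (n - 1))).Nonempty :=
    ⟨⟨x, (hS S hS𝒮).2 hx⟩, mem_subtype.mpr (mem_biUnion.mpr ⟨S, hS𝒮, hx⟩)⟩
  rw [partitionRank_eq, ← card_subtype_of_forall fun _ hx => hBn hx]
  refine (braidJoin n 𝒮).card_sub_card_quotient_lt hB fun x y hxy => ?_
  simp only [mem_subtype]
  exact braidJoin_le_braidFlat_biUnion hxy

theorem sum_lt_partitionRank_braidJoin (h𝒮 : 𝒮.Nonempty)
    (hS : ∀ S ∈ 𝒮, S.Nonempty ∧ S ⊆ Icc 1 (n - 1)) (w : Finset ℕ → ℕ)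
    (hw : ∀ T ⊆ 𝒮, T.Nonempty → ∑ S ∈ T, w S + 2 ≤ (T.biUnion id).card) :
    ∑ S ∈ 𝒮, w S < partitionRank n (braidJoin n 𝒮) := by
  let b (S : Finset ℕ) : Finset {i : ℕ // i ∈ Icc 1 (n - 1)} :=
    S.subtype (· ∈ Icc 1 (n - 1))
  have hb : ∀ S ∈ 𝒮, (b S).Nonempty := fun S hS' => by
    obtain ⟨x, hx⟩ := (hS S hS').1
    exact ⟨⟨x, (hS S hS').2 hx⟩, mem_subtype.mpr hx⟩
  have hrel : ∀ S ∈ 𝒮, ∀ x ∈ b S, ∀ y ∈ b S, braidJoin n 𝒮 x y :=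
    fun _ hS' _ hx _ hy =>
      braidFlat_le_braidJoin hS' (Or.inr ⟨mem_subtype.mp hx, mem_subtype.mp hy⟩)
  have hcard : ∀ T ⊆ 𝒮, (T.biUnion b).card = (T.biUnion id).card := fun T hT => by
    have hTn : T.biUnion id ⊆ Icc 1 (n - 1) := biUnion_subset.mpr fun S hS' => (hS S (hT hS')).2
    rw [← card_subtype_of_forall fun _ hx => hTn hx]
    congr 1
    ext x
    simp [b]
  rw [partitionRank_eq]
  exact (braidJoin n 𝒮).sum_lt_card_sub_card_quotient h𝒮 hb hrel w
    fun T hT hTne => hcard T hT ▸ hw T hT hTne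

end Flats

theorem support_subset_support_of_le {α : Type*} {w m : α → ℕ} (h : w ≤ m) :
    support w ⊆ support m := fun x hx hm => hx (Nat.eq_zero_of_le_zero (hm ▸ h x))

def braidIndex (n : ℕ) : Set (Finset ℕ) := {S | 3 ≤ S.card ∧ S ⊆ Icc 1 (n - 1)}

theorem braidFlat_injOn_braidIndex (n : ℕ) : Set.InjOn (braidFlat n) (braidIndex n) :=
  (braidFlat_injOn n).mono fun _ ⟨h3, hS⟩ => show 2 ≤ _ ∧ _ from ⟨by omega, hS⟩

/-- The tuple `m̃` of the statement. -/
noncomputable def braidLift (n : ℕ) (m : Finset ℕ → ℕ)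
    (π : Setoid {i : ℕ // i ∈ Icc 1 (n - 1)}) : ℕ :=
  ∑ᶠ S ∈ {S : Finset ℕ | 3 ≤ S.card ∧ braidFlat n S = π}, m S

def supportFamily (n : ℕ) (w : Finset ℕ → ℕ) : Finset (Finset ℕ) :=
  (Icc 1 (n - 1)).powerset.filter fun S => 0 < w S

def IsCerberus (n : ℕ) (m : Finset ℕ → ℕ) : Prop :=
  ∀ w : Finset ℕ → ℕ, w ≤ m →
    ∑ᶠ S, w S ≤ ((supportFamily n w).biUnion id ∪ {n}).card - 3

def IsDragonHallRado (n : ℕ) (μ : Setoid {i : ℕ // i ∈ Icc 1 (n - 1)} → ℕ) : Prop :=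
  ∀ mt : Setoid {i : ℕ // i ∈ Icc 1 (n - 1)} → ℕ, mt ≠ 0 → mt ≤ μ →
    ∑ᶠ π, mt π < partitionRank n (sSup {π | 0 < mt π})

section Lift

variable {n : ℕ} {S : Finset ℕ} {w m : Finset ℕ → ℕ}

theorem mem_supportFamily : S ∈ supportFamily n w ↔ S ⊆ Icc 1 (n - 1) ∧ 0 < w S := by
  rw [supportFamily, mem_filter, mem_powerset]

theorem card_biUnion_supportFamily_union_singleton (n : ℕ) (w : Finset ℕ → ℕ) :
    ((supportFamily n w).biUnion id ∪ {n}).card = ((supportFamily n w).biUnion id).card + 1 := by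
  refine card_union_of_disjoint (disjoint_singleton_right.mpr fun h => ?_)
  obtain ⟨S, hS, hnS⟩ := mem_biUnion.mp h
  have := mem_Icc.mp ((mem_supportFamily.mp hS).1 hnS)
  omega

theorem supportFamily_indicator {T : Finset (Finset ℕ)} (hT : T ⊆ supportFamily n w) :
    supportFamily n ((T : Set (Finset ℕ)).indicator w) = T := by
  ext S
  rw [mem_supportFamily]
  by_cases hS : S ∈ T
  · simpa [hS] using mem_supportFamily.mp (hT hS)
  · simp [hS]

theorem coe_supportFamily (hw : support w ⊆ braidIndex n) :
    (supportFamily n w : Set (Finset ℕ)) = support w := by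
  ext S
  rw [mem_coe, mem_supportFamily, mem_support, Nat.pos_iff_ne_zero]
  exact ⟨And.right, fun h => ⟨(hw h).2, h⟩⟩

theorem finsum_eq_sum_supportFamily (hw : support w ⊆ braidIndex n) :
    ∑ᶠ S, w S = ∑ S ∈ supportFamily n w, w S :=
  finsum_eq_sum_of_support_subset w (coe_supportFamily hw).ge

theorem nonempty_and_subset_of_mem_supportFamily (hw : support w ⊆ braidIndex n)
    (hS : S ∈ supportFamily n w) : S.Nonempty ∧ S ⊆ Icc 1 (n - 1) := by
  rw [← mem_coe, coe_supportFamily hw] at hS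
  exact ⟨card_pos.mp (by have := (hw hS).1; omega), (hw hS).2⟩

theorem supportFamily_nonempty (hw : support w ⊆ braidIndex n) (hw0 : w ≠ 0) :
    (supportFamily n w).Nonempty := by
  rw [← coe_nonempty, coe_supportFamily hw, support_nonempty_iff]
  exact hw0

theorem braidLift_braidFlat (hw : support w ⊆ braidIndex n) (hS : S ∈ braidIndex n) :
    braidLift n w (braidFlat n S) = w S := by
  rw [braidLift, finsum_mem_inter_support_eq w _ {S}, finsum_mem_singleton]
  ext T
  simp only [Set.mem_inter_iff, Set.mem_ofPred_eq, Set.mem_singleton_iff, mem_support]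
  constructor
  · rintro ⟨⟨-, hTS⟩, hT⟩
    exact ⟨braidFlat_injOn_braidIndex n (hw hT) hS hTS, hT⟩
  · rintro ⟨rfl, hT⟩
    exact ⟨⟨hS.1, rfl⟩, hT⟩

theorem support_braidLift (hw : support w ⊆ braidIndex n) :
    support (braidLift n w) = braidFlat n '' support w := by
  ext π
  constructor
  · intro hπ
    obtain ⟨S, ⟨-, rfl⟩, hS⟩ := exists_ne_zero_of_finsum_mem_ne_zero hπ
    exact ⟨S, hS, rfl⟩
  · rintro ⟨S, hS, rfl⟩
    rwa [mem_support, braidLift_braidFlat hw (hw hS)]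

theorem braidLift_ne_zero_iff (hw : support w ⊆ braidIndex n) :
    braidLift n w ≠ 0 ↔ w ≠ 0 := by
  rw [Ne, Ne, ← support_eq_empty_iff, ← support_eq_empty_iff (f := w), support_braidLift hw,
    Set.image_eq_empty]

theorem finsum_braidLift (hw : support w ⊆ braidIndex n) :
    ∑ᶠ π, braidLift n w π = ∑ᶠ S, w S := by
  rw [← finsum_mem_support, support_braidLift hw,
    finsum_mem_image ((braidFlat_injOn_braidIndex n).mono hw), ← finsum_mem_support w]
  exact finsum_mem_congr rfl fun S hS => braidLift_braidFlat hw (hw hS)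

theorem sSup_setOf_pos_braidLift (hw : support w ⊆ braidIndex n) :
    sSup {π | 0 < braidLift n w π} = braidJoin n (supportFamily n w) := by
  simp_rw [Nat.pos_iff_ne_zero]
  rw [braidJoin, coe_supportFamily hw]
  exact congrArg sSup (support_braidLift hw)

theorem braidLift_mono (hm : support m ⊆ braidIndex n) (h : w ≤ m) :
    braidLift n w ≤ braidLift n m := by
  have hw := (support_subset_support_of_le h).trans hm
  intro π
  by_cases hπ : π ∈ support (braidLift n w)
  · rw [support_braidLift hw] at hπ
    obtain ⟨S, hS, rfl⟩ := hπ
    rw [braidLift_braidFlat hw (hw hS), braidLift_braidFlat hm (hw hS)]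
    exact h S
  · rw [notMem_support.mp hπ]
    exact Nat.zero_le _

theorem exists_braidLift_eq_of_le (hm : support m ⊆ braidIndex n)
    {μ : Setoid {i : ℕ // i ∈ Icc 1 (n - 1)} → ℕ} (h : μ ≤ braidLift n m) :
    ∃ w ≤ m, braidLift n w = μ := by
  classical
  let w := (braidIndex n).indicator fun S => μ (braidFlat n S)
  have hw : support w ⊆ braidIndex n := Set.support_indicator_subset
  have hwm : w ≤ m := fun S => by
    by_cases hS : S ∈ braidIndex n
    · simpa [w, hS, braidLift_braidFlat hm hS] using h (braidFlat n S)
    · simp [w, hS]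
  refine ⟨w, hwm, funext fun π => ?_⟩
  by_cases hπ : π ∈ braidFlat n '' braidIndex n
  · obtain ⟨S, hS, rfl⟩ := hπ
    simp [braidLift_braidFlat hw hS, w, hS]
  · have hnot : ∀ v, support v ⊆ braidIndex n → braidLift n v π = 0 := fun v hv =>
      notMem_support.mp fun h' => hπ ((Set.image_mono hv) (support_braidLift hv ▸ h'))
    rw [hnot w hw, eq_comm, ← Nat.le_zero, ← hnot m hm]
    exact h π

end Lift

section Conditions

variable {n : ℕ} {w m : Finset ℕ → ℕ}

theorem isDragonHallRado_braidLift_iff (hm : support m ⊆ braidIndex n) :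
    IsDragonHallRado n (braidLift n m) ↔ ∀ w ≤ m, w ≠ 0 →
      ∑ S ∈ supportFamily n w, w S < partitionRank n (braidJoin n (supportFamily n w)) := by
  have key : ∀ w ≤ m,
      ∑ᶠ π, braidLift n w π < partitionRank n (sSup {π | 0 < braidLift n w π}) ↔
        ∑ S ∈ supportFamily n w, w S < partitionRank n (braidJoin n (supportFamily n w)) := by
    intro w hwm
    have hw := (support_subset_support_of_le hwm).trans hm
    rw [finsum_braidLift hw, finsum_eq_sum_supportFamily hw, sSup_setOf_pos_braidLift hw]
  constructor
  · intro hD w hwm hw0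
    have hw := (support_subset_support_of_le hwm).trans hm
    exact (key w hwm).mp (hD _ ((braidLift_ne_zero_iff hw).mpr hw0) (braidLift_mono hm hwm))
  · intro h μ hμ0 hμ
    obtain ⟨w, hwm, rfl⟩ := exists_braidLift_eq_of_le hm hμ
    have hw := (support_subset_support_of_le hwm).trans hm
    exact (key w hwm).mpr (h w hwm ((braidLift_ne_zero_iff hw).mp hμ0))

theorem sum_add_two_le_card_of_isCerberus (hm : support m ⊆ braidIndex n) (hC : IsCerberus n m)
    (hwm : w ≤ m) (hw0 : w ≠ 0) :
    ∑ S ∈ supportFamily n w, w S + 2 ≤ ((supportFamily n w).biUnion id).card := by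
  have hw := (support_subset_support_of_le hwm).trans hm
  have hCw := hC w hwm
  rw [finsum_eq_sum_supportFamily hw, card_biUnion_supportFamily_union_singleton] at hCw
  obtain ⟨S, hS⟩ := supportFamily_nonempty hw hw0
  have := single_le_sum (f := w) (fun _ _ => Nat.zero_le _) hS
  have := (mem_supportFamily.mp hS).2
  omega

theorem sum_lt_partitionRank_of_isCerberus (hm : support m ⊆ braidIndex n) (hC : IsCerberus n m)
    (hwm : w ≤ m) (hw0 : w ≠ 0) :
    ∑ S ∈ supportFamily n w, w S < partitionRank n (braidJoin n (supportFamily n w)) := by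
  have hw := (support_subset_support_of_le hwm).trans hm
  refine sum_lt_partitionRank_braidJoin (supportFamily_nonempty hw hw0)
    (fun S hS => nonempty_and_subset_of_mem_supportFamily hw hS) w fun T hT hTne => ?_
  set v := (T : Set (Finset ℕ)).indicator w
  have hvT : supportFamily n v = T := supportFamily_indicator hT
  have hv0 : v ≠ 0 := fun h => hTne.ne_empty (by simpa [h, supportFamily] using hvT.symm)
  have := sum_add_two_le_card_of_isCerberus hm hC ((Set.indicator_le_self _ _).trans hwm) hv0
  rwa [hvT, sum_congr rfl fun S hS => Set.indicator_of_mem (mem_coe.mpr hS) w] at this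

theorem isCerberus_of_forall_sum_lt_partitionRank (hm : support m ⊆ braidIndex n)
    (h : ∀ w ≤ m, w ≠ 0 →
      ∑ S ∈ supportFamily n w, w S < partitionRank n (braidJoin n (supportFamily n w))) :
    IsCerberus n m := by
  intro w hwm
  have hw := (support_subset_support_of_le hwm).trans hm
  rcases eq_or_ne w 0 with rfl | hw0
  · simp
  rw [finsum_eq_sum_supportFamily hw, card_biUnion_supportFamily_union_singleton]
  have := h w hwm hw0
  have := partitionRank_braidJoin_lt (supportFamily_nonempty hw hw0)
    fun S hS => nonempty_and_subset_of_mem_supportFamily hw hS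
  omega

end Conditions

theorem cerberus_iff_dragonHallRado_general (n : ℕ) (m : Finset ℕ → ℕ)
    (hsupp : ∀ S, m S ≠ 0 → 3 ≤ S.card ∧ S ⊆ Icc 1 (n - 1)) :
    -- the Cerberus condition for `m`
    (∀ m' : Finset ℕ → ℕ, (∀ S, m' S ≤ m S) →
        (∑ᶠ S, m' S) ≤
          (((Icc 1 (n - 1)).powerset.filter (fun S => 0 < m' S)).biUnion id ∪ {n}).card - 3) ↔
    -- the dragon Hall–Rado condition for `m̃`
    (∀ mt : Setoid {i : ℕ // i ∈ Icc 1 (n - 1)} → ℕ,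
        mt ≠ 0 →
        (∀ π, mt π ≤ ∑ᶠ S ∈ {S : Finset ℕ | 3 ≤ S.card ∧ braidFlat n S = π}, m S) →
        (∑ᶠ π, mt π) < partitionRank n (sSup {π | 0 < mt π})) := by
  show IsCerberus n m ↔ IsDragonHallRado n (braidLift n m)
  rw [isDragonHallRado_braidLift_iff hsupp]
  exact ⟨fun hC _ hwm hw0 => sum_lt_partitionRank_of_isCerberus hsupp hC hwm hw0,
    isCerberus_of_forall_sum_lt_partitionRank hsupp⟩

/-- Let `n ≥ 3` and `m = (m_S)` be indexed by subsets `S ⊆ [n-1]` with `|S| ≥ 3`.  Let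
`m̃`, indexed by the nonempty flats of the braid matroid `B_{n-1}` (partitions of
`[n-1]`), be given by `m̃_{F_S} = m_S` and `m̃_F = 0` for flats not of the form `F_S`.
Then `m` satisfies the Cerberus condition iff `m̃` satisfies the dragon Hall–Rado
condition for `B_{n-1}`. -/
theorem cerberus_iff_dragonHallRado (n : ℕ) (hn : 3 ≤ n) (m : Finset ℕ → ℕ)
    (hsupp : ∀ S, m S ≠ 0 → 3 ≤ S.card ∧ S ⊆ Icc 1 (n - 1)) :
    -- the Cerberus condition for `m`
    (∀ m' : Finset ℕ → ℕ, (∀ S, m' S ≤ m S) →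
        (∑ᶠ S, m' S) ≤
          (((Icc 1 (n - 1)).powerset.filter (fun S => 0 < m' S)).biUnion id ∪ {n}).card - 3) ↔
    -- the dragon Hall–Rado condition for `m̃`
    (∀ mt : Setoid {i : ℕ // i ∈ Icc 1 (n - 1)} → ℕ,
        mt ≠ 0 →
        (∀ π, mt π ≤ ∑ᶠ S ∈ {S : Finset ℕ | 3 ≤ S.card ∧ braidFlat n S = π}, m S) →
        (∑ᶠ π, mt π) < partitionRank n (sSup {π | 0 < mt π})) :=
  cerberus_iff_dragonHallRado_general n m hsupp
end
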